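/- arXiv:2102.06473 — 2 statements merged into one kernel-verified Lean document; each statement's English description precedes it below -/
import Mathlib

section
/- In the degenerate Lusztig extension L, the Brundan–Kleshchev elements satisfy σᵣ(Qᵣ(σᵣ(i)))·Qᵣ(i) = 1 − (yᵣ₊₁ − yᵣ)² when iᵣ = iᵣ₊₁; = (2 + yᵣ − yᵣ₊₁)/(1 + yᵣ − yᵣ₊₁)² when iᵣ − iᵣ₊₁ = 1 and e ≠ 2; = (2 + yᵣ₊₁ − yᵣ)/(1 + yᵣ₊₁ − yᵣ)² when iᵣ − iᵣ₊₁ = −1 and e ≠ 2; = 1/(1 + yᵣ₊₁ − yᵣ)² when iᵣ − iᵣ₊₁ = 1 and e = 2; and = 1 − 1/(yᵣ − yᵣ₊₁ + iᵣ − iᵣ₊₁)² when iᵣ − iᵣ₊₁ ≠ 0, ±1. -/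
open MvPolynomial

/-- The rational function field `k(X₁,...,Xₙ)`. -/
abbrev RatFn (k : Type*) [Field k] (n : ℕ) := FractionRing (MvPolynomial (Fin n) k)

/-- The variable `Xₛ` viewed inside `k(X₁,...,Xₙ)`. -/
noncomputable def RatFn.Xv (k : Type*) [Field k] (n : ℕ) (s : Fin n) : RatFn k n :=
  algebraMap (MvPolynomial (Fin n) k) (RatFn k n) (X s)

/-- The action of a permutation on `k(X₁,...,Xₙ)` by permuting the variables. -/
noncomputable def RatFn.act (k : Type*) [Field k] (n : ℕ) (σ : Equiv.Perm (Fin n)) :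
    RatFn k n ≃+* RatFn k n :=
  IsFractionRing.ringEquivOfRingEquiv (renameEquiv k σ).toRingEquiv

/-- The Demazure operator `∂(f) = (σ_{a,b}(f) - f)/(X_a - X_b)` on `k(X₁,...,Xₙ)`. -/
noncomputable def RatFn.dem (k : Type*) [Field k] (n : ℕ) (a b : Fin n) (f : RatFn k n) :
    RatFn k n :=
  (RatFn.act k n (Equiv.swap a b) f - f) / (RatFn.Xv k n a - RatFn.Xv k n b)

/-- The residue `d ∈ ℤ/eℤ` interpreted in `k` (where `e = char k`). -/
noncomputable def resCast (k : Type*) [Field k] (n e : ℕ) [CharP k e] (d : ZMod e) :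
    RatFn k n :=
  algebraMap k (RatFn k n) (ZMod.castHom (dvd_refl e) k d)

/-- The Brundan–Kleshchev rational functions `Qᵣ(i) ∈ k(y)` (degenerate case), written in
the variables `y` of the rational function field, for the pair of positions `a = r`,
`b = r+1` and the tuple `i ∈ Iⁿ`, `I = ℤ/eℤ`, `e = char k`. -/
noncomputable def QBK (k : Type*) [Field k] (n e : ℕ) [CharP k e] (a b : Fin n)
    (i : Fin n → ZMod e) : RatFn k n :=
  if i a - i b = 0 then 1 + RatFn.Xv k n b - RatFn.Xv k n a
  else if i a - i b = 1 ∧ e ≠ 2 then 1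
  else if i a - i b = -1 ∧ e ≠ 2 then
    (2 + RatFn.Xv k n b - RatFn.Xv k n a) / (1 + RatFn.Xv k n b - RatFn.Xv k n a) ^ 2
  else if i a - i b = 1 ∧ e = 2 then 1 / (1 + RatFn.Xv k n b - RatFn.Xv k n a)
  else 1 - 1 / (RatFn.Xv k n a - RatFn.Xv k n b + resCast k n e (i a - i b))

section helpers

variable (k : Type*) [Field k] (n : ℕ)

lemma act_algebraMap' (σ : Equiv.Perm (Fin n)) (p : MvPolynomial (Fin n) k) :
    RatFn.act k n σ (algebraMap _ _ p)
      = algebraMap (MvPolynomial (Fin n) k) (RatFn k n) (rename σ p) :=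
  IsFractionRing.ringEquivOfRingEquiv_algebraMap _ p

lemma act_Xv' (σ : Equiv.Perm (Fin n)) (s : Fin n) :
    RatFn.act k n σ (RatFn.Xv k n s) = RatFn.Xv k n (σ s) := by
  rw [RatFn.Xv, act_algebraMap', rename_X]; rfl

lemma act_C' (σ : Equiv.Perm (Fin n)) (c : k) :
    RatFn.act k n σ (algebraMap k (RatFn k n) c) = algebraMap k (RatFn k n) c := by
  rw [IsScalarTower.algebraMap_apply k (MvPolynomial (Fin n) k) (RatFn k n),
    act_algebraMap']
  simp [MvPolynomial.algebraMap_eq]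

lemma act_resCast' (e : ℕ) [CharP k e] (σ : Equiv.Perm (Fin n)) (d : ZMod e) :
    RatFn.act k n σ (resCast k n e d) = resCast k n e d := act_C' k n σ _

lemma resCast_neg' (e : ℕ) [CharP k e] (d : ZMod e) :
    resCast k n e (-d) = - resCast k n e d := by
  have h : ∀ x, resCast k n e x
      = ((algebraMap k (RatFn k n)).comp (ZMod.castHom (dvd_refl e) k)) x := fun _ => rfl
  rw [h, h, map_neg]

lemma zmod_one_ne_zero (e : ℕ) [CharP k e] : (1 : ZMod e) ≠ 0 := by
  intro h
  have he1 : e ≠ 1 := CharP.char_ne_one k e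
  have : e ∣ 1 := by
    have := (CharP.cast_eq_zero_iff (ZMod e) e 1).mp (by simpa using h)
    simpa using this
  exact he1 (Nat.dvd_one.mp this)

lemma zmod_neg_one_ne_one (e : ℕ) [CharP k e] (he2 : e ≠ 2) : (-1 : ZMod e) ≠ 1 := by
  intro h
  have h2 : ((2 : ℕ) : ZMod e) = 0 := by push_cast; linear_combination -h
  have : e ∣ 2 := (CharP.cast_eq_zero_iff (ZMod e) e 2).mp h2
  rcases (Nat.dvd_prime Nat.prime_two).mp this with h | h
  · exact CharP.char_ne_one k e h
  · exact he2 h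

lemma mul_one_sub_inv_aux {F : Type*} [Field F] (x y : F) (h : y = -x) :
    (1 - 1/y) * (1 - 1/x) = 1 - 1/x^2 := by subst h; ring

end helpers

set_option maxHeartbeats 1000000 in
set_option synthInstance.maxHeartbeats 400000 in
open RatFn in
/-- Brundan–Kleshchev's computation of `σᵣ(Qᵣ(σᵣ(i)))·Qᵣ(i)` in `k(y)` (degenerate case). -/
theorem QBK_sigma_mul (k : Type*) [Field k] (n e : ℕ) [CharP k e]
    (r : ℕ) (hr : r + 1 < n) (i : Fin n → ZMod e)
    (a : Fin n) (b : Fin n) (ha : a = ⟨r, Nat.lt_of_succ_lt hr⟩) (hb : b = ⟨r + 1, hr⟩) :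
    act k n (Equiv.swap a b) (QBK k n e a b (fun s => i (Equiv.swap a b s)))
        * QBK k n e a b i
      = if i a - i b = 0 then 1 - (Xv k n b - Xv k n a) ^ 2
        else if i a - i b = 1 ∧ e ≠ 2 then
          (2 + Xv k n a - Xv k n b) / (1 + Xv k n a - Xv k n b) ^ 2
        else if i a - i b = -1 ∧ e ≠ 2 then
          (2 + Xv k n b - Xv k n a) / (1 + Xv k n b - Xv k n a) ^ 2
        else if i a - i b = 1 ∧ e = 2 then 1 / (1 + Xv k n b - Xv k n a) ^ 2
        else 1 - 1 / (Xv k n a - Xv k n b + resCast k n e (i a - i b)) ^ 2 := by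
  have h1 : (1 : ZMod e) ≠ 0 := zmod_one_ne_zero k e
  have hm1 : (-1 : ZMod e) ≠ 0 := neg_ne_zero.mpr h1
  by_cases h0 : i a - i b = 0
  · have s0 : i b - i a = 0 := by linear_combination -h0
    simp only [QBK, Equiv.swap_apply_left, Equiv.swap_apply_right]
    rw [if_pos s0, if_pos h0, if_pos h0]
    simp only [map_sub, map_add, map_one, act_Xv', Equiv.swap_apply_left,
      Equiv.swap_apply_right]
    ring
  by_cases hP : i a - i b = 1 ∧ e ≠ 2
  · obtain ⟨hd, he2⟩ := hP
    have hs : i b - i a = -1 := by linear_combination -hd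
    have hn11 : (-1 : ZMod e) ≠ 1 := zmod_neg_one_ne_one k e he2
    have n0 : i b - i a ≠ 0 := by rw [hs]; exact hm1
    have n1 : ¬(i b - i a = 1 ∧ e ≠ 2) := by rintro ⟨h, -⟩; rw [hs] at h; exact hn11 h
    have p2 : i b - i a = -1 ∧ e ≠ 2 := ⟨hs, he2⟩
    have q0 : i a - i b ≠ 0 := h0
    have q1 : i a - i b = 1 ∧ e ≠ 2 := ⟨hd, he2⟩
    simp only [QBK, Equiv.swap_apply_left, Equiv.swap_apply_right]
    rw [if_neg n0, if_neg n1, if_pos p2, if_neg q0, if_pos q1, if_neg q0, if_pos q1]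
    simp only [map_div₀, map_pow, map_sub, map_add, map_one, map_ofNat, act_Xv',
      Equiv.swap_apply_left, Equiv.swap_apply_right]
    ring
  by_cases hM : i a - i b = -1 ∧ e ≠ 2
  · obtain ⟨hd, he2⟩ := hM
    have hs : i b - i a = 1 := by linear_combination -hd
    have hn11 : (-1 : ZMod e) ≠ 1 := zmod_neg_one_ne_one k e he2
    have n0 : i b - i a ≠ 0 := by rw [hs]; exact h1
    have p1 : i b - i a = 1 ∧ e ≠ 2 := ⟨hs, he2⟩
    have q0 : i a - i b ≠ 0 := h0
    have q1 : ¬(i a - i b = 1 ∧ e ≠ 2) := by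
      rintro ⟨h, -⟩; rw [hd] at h; exact hn11 h
    have q2 : i a - i b = -1 ∧ e ≠ 2 := ⟨hd, he2⟩
    simp only [QBK, Equiv.swap_apply_left, Equiv.swap_apply_right]
    rw [if_neg n0, if_pos p1, if_neg q0, if_neg q1, if_pos q2, if_neg q0, if_neg q1,
      if_pos q2]
    simp only [map_one]
    ring
  by_cases hT : i a - i b = 1 ∧ e = 2
  · obtain ⟨hd, he2⟩ := hT
    subst he2
    haveI : CharP (RatFn k n) 2 :=
      charP_of_injective_algebraMap (algebraMap k (RatFn k n)).injective 2
    have hs : i b - i a = 1 := by rw [show (1 : ZMod 2) = -1 from by decide]; linear_combination -hd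
    have d1 : (1 : ZMod 2) ≠ 0 := by decide
    have n0 : i b - i a ≠ 0 := by rw [hs]; exact d1
    have n1 : ¬(i b - i a = 1 ∧ (2:ℕ) ≠ 2) := by rintro ⟨-, h⟩; exact h rfl
    have n2 : ¬(i b - i a = -1 ∧ (2:ℕ) ≠ 2) := by rintro ⟨-, h⟩; exact h rfl
    have q0 : i a - i b ≠ 0 := h0
    simp only [QBK, Equiv.swap_apply_left, Equiv.swap_apply_right]
    rw [if_neg n0, if_neg n1, if_neg n2,
      if_pos (show i b - i a = 1 ∧ True from ⟨hs, trivial⟩),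
      if_neg q0, if_neg hP, if_neg hM,
      if_pos (show i a - i b = 1 ∧ True from ⟨hd, trivial⟩),
      if_neg q0, if_neg hP, if_neg hM,
      if_pos (show i a - i b = 1 ∧ True from ⟨hd, trivial⟩)]
    simp only [map_div₀, map_sub, map_add, map_one, act_Xv',
      Equiv.swap_apply_left, Equiv.swap_apply_right]
    have h2 : (2 : RatFn k n) = 0 := CharTwo.two_eq_zero
    rw [show 1 + Xv k n a - Xv k n b = 1 + Xv k n b - Xv k n a by
      linear_combination (Xv k n a - Xv k n b) * h2]
    rw [div_mul_div_comm, one_mul, ← sq]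
  · have n0 : i b - i a ≠ 0 := fun h => h0 (by linear_combination -h)
    have n1 : ¬(i b - i a = 1 ∧ e ≠ 2) := by
      rintro ⟨h, h2⟩; exact hM ⟨by linear_combination -h, h2⟩
    have n2 : ¬(i b - i a = -1 ∧ e ≠ 2) := by
      rintro ⟨h, h2⟩; exact hP ⟨by linear_combination -h, h2⟩
    have n3 : ¬(i b - i a = 1 ∧ e = 2) := by
      rintro ⟨h, h2⟩
      refine hT ⟨?_, h2⟩
      subst h2
      rw [show (1 : ZMod 2) = -1 from by decide]
      linear_combination -h
    have hres : resCast k n e (i b - i a) = - resCast k n e (i a - i b) := by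
      rw [show i b - i a = -(i a - i b) from by ring, resCast_neg']
    simp only [QBK, Equiv.swap_apply_left, Equiv.swap_apply_right]
    rw [if_neg n0, if_neg n1, if_neg n2, if_neg n3, if_neg h0, if_neg hP, if_neg hM,
      if_neg hT, if_neg h0, if_neg hP, if_neg hM, if_neg hT, hres]
    simp only [map_sub, map_add, map_one, map_div₀, map_neg, act_Xv', act_resCast',
      Equiv.swap_apply_left, Equiv.swap_apply_right]
    exact mul_one_sub_inv_aux _ _ (by ring)
end

section
/- In the Lusztig extension L, with ψᵣ := Σ_{i∈C}[θᵣ − δ_{iᵣ,iᵣ₊₁}/(yᵣ − yᵣ₊₁)]ε(i), one has (ψᵣψᵣ₊₁ψᵣ − ψᵣ₊₁ψᵣψᵣ₊₁)ε(i) = δ_{iᵣ₊₂,iᵣ}·[(θᵣ₊₁² − θᵣ²)/(yᵣ − yᵣ₊₂) + δ_{iᵣ₊₁,iᵣ}(yᵣ + yᵣ₊₂ − 2yᵣ₊₁)/((yᵣ − yᵣ₊₁)²(yᵣ₊₁ − yᵣ₊₂)²)]ε(i); in particular this equals −ε(i) if iᵣ₊₂ = iᵣ and iᵣ − iᵣ₊₁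 = 1 with e ≠ 2; ε(i) if iᵣ₊₂ = iᵣ and iᵣ − iᵣ₊₁ = −1 with e ≠ 2; −(yᵣ + yᵣ₊₂ − 2yᵣ₊₁)ε(i) if iᵣ₊₂ = iᵣ and iᵣ − iᵣ₊₁ = 1 with e = 2; and 0 otherwise. -/
/-!
On `ε(i)` the element `ψᵣ` acts as `θᵣ - dᵣ(i)` with `dᵣ(i) = δ_{iᵣ,iᵣ₊₁}/(yᵣ - yᵣ₊₁)`, and moving
a rational function `f` to the left past `θᵣ` turns it into `sᵣ(f)`, while `θᵣ` carries `ε(i)` to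
`ε(sᵣ i)`. Expanding both triple products this way, the `θθθ` terms cancel by the braid relation
and the coefficients of `θᵣ₊₁θᵣ` and `θᵣθᵣ₊₁` cancel because the corrections are equivariant.
The coefficients of `θᵣ` and `θᵣ₊₁` vanish by the partial-fraction identity
`d_{xy} d_{yz} = d_{xz} (d_{xy} + d_{yz})`, which leaves `d_{r,r+2}(i) (θᵣ₊₁² - θᵣ²)` plus a
scalar. Substituting the case formula for `θ²` then gives the explicit values.
-/

open MvPolynomial

section CorrectedCrossing

variable {ι K A : Type*} [CommRing K] [Ring A] {C : Finset ι} {ε : ι → A}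

theorem OrthogonalIdempotents.sum_mul_of_mul_eq (hε : OrthogonalIdempotents ε) (g : ι → A)
    {w : ι} (hw : w ∈ C) {Y : A} (hY : ε w * Y = Y) : (∑ v ∈ C, g v * ε v) * Y = g w * Y := by
  rw [← hY, ← mul_assoc, Finset.sum_mul, Finset.sum_eq_single_of_mem w hw
    (fun v _ hv => by rw [mul_assoc, hε.ortho hv, mul_zero]), mul_assoc (g w), (hε.idem w).eq,
    mul_assoc]

variable (C ε) in
def correctedCrossing (j : K →+* A) (θ : A) (d : ι → K) : A :=
  ∑ w ∈ C, (θ - j (d w)) * ε w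

variable {j : K →+* A}

theorem correctedCrossing_mul (hε : OrthogonalIdempotents ε) (hcomm : ∀ f w, j f * ε w = ε w * j f)
    {θ : A} {σ : K ≃+* K} (hθ : ∀ f, θ * j f = j (σ f) * θ) (d : ι → K) {w : ι} (hw : w ∈ C)
    {Y : A} (hY : ε w * Y = Y) (f : K) :
    correctedCrossing C ε j θ d * (j f * Y) = j (σ f) * (θ * Y) - j (d w * f) * Y := by
  rw [correctedCrossing, hε.sum_mul_of_mul_eq _ hw (by rw [← mul_assoc, ← hcomm, mul_assoc, hY]),
    sub_mul, ← mul_assoc, hθ, mul_assoc, map_mul, mul_assoc]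

theorem correctedCrossing_braid_sub (hε : OrthogonalIdempotents ε)
    (hcomm : ∀ f w, j f * ε w = ε w * j f) {θ₁ θ₂ : A} {σ₁ σ₂ : K ≃+* K} {τ₁ τ₂ : ι → ι}
    (hθj₁ : ∀ f, θ₁ * j f = j (σ₁ f) * θ₁) (hθj₂ : ∀ f, θ₂ * j f = j (σ₂ f) * θ₂)
    (hθε₁ : ∀ w, θ₁ * ε w = ε (τ₁ w) * θ₁) (hθε₂ : ∀ w, θ₂ * ε w = ε (τ₂ w) * θ₂)
    (hτ₁ : ∀ w ∈ C, τ₁ w ∈ C) (hτ₂ : ∀ w ∈ C, τ₂ w ∈ C) (hbraid : θ₁ * θ₂ * θ₁ = θ₂ * θ₁ * θ₂)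
    (d₁ d₂ : ι → K) {i : ι} (hi : i ∈ C) :
    let ψ₁ := correctedCrossing C ε j θ₁ d₁
    let ψ₂ := correctedCrossing C ε j θ₂ d₂
    (ψ₁ * ψ₂ * ψ₁ - ψ₂ * ψ₁ * ψ₂) * ε i =
      j (σ₂ (σ₁ (d₂ i)) - d₁ (τ₂ (τ₁ i))) * (θ₂ * θ₁ * ε i)
      - j (σ₁ (σ₂ (d₁ i)) - d₂ (τ₁ (τ₂ i))) * (θ₁ * θ₂ * ε i)
      + j (σ₂ (d₁ (τ₂ i))) * (θ₂ * θ₂ * ε i) - j (σ₁ (d₂ (τ₁ i))) * (θ₁ * θ₁ * ε i)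
      + j (d₁ (τ₁ i) * d₂ (τ₁ i) + σ₁ (d₂ i * d₁ i) - d₂ (τ₁ i) * σ₁ (d₂ i)) * (θ₁ * ε i)
      - j (d₂ (τ₂ i) * d₁ (τ₂ i) + σ₂ (d₁ i * d₂ i) - d₁ (τ₂ i) * σ₂ (d₁ i)) * (θ₂ * ε i)
      + j (d₂ i * d₁ i * d₂ i - d₁ i * d₂ i * d₁ i) * ε i := by
  intro ψ₁ ψ₂
  have hlabel : ∀ {θ : A} {τ : ι → ι}, (∀ w, θ * ε w = ε (τ w) * θ) →
      ∀ {w Y}, ε w * Y = Y → ε (τ w) * (θ * Y) = θ * Y := fun hθ _ _ hY => by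
    rw [← mul_assoc, ← hθ, mul_assoc, hY]
  have h₀ : ε i * ε i = ε i := (hε.idem i).eq
  have h₁ := hlabel hθε₁ h₀
  have h₂ := hlabel hθε₂ h₀
  have hψ₁ {w Y} (hw : w ∈ C) (hY : ε w * Y = Y) := correctedCrossing_mul hε hcomm hθj₁ d₁ hw hY
  have hψ₂ {w Y} (hw : w ∈ C) (hY : ε w * Y = Y) := correctedCrossing_mul hε hcomm hθj₂ d₂ hw hY
  have hbraid' : θ₁ * (θ₂ * (θ₁ * ε i)) = θ₂ * (θ₁ * (θ₂ * ε i)) := by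
    simp only [← mul_assoc, hbraid]
  rw [sub_mul, ← one_mul (ε i), ← map_one j]
  simp only [ψ₁, ψ₂, mul_assoc, mul_sub, hψ₁ hi h₀, hψ₂ hi h₀, hψ₁ (hτ₁ i hi) h₁,
    hψ₂ (hτ₂ i hi) h₂, hψ₁ (hτ₂ _ (hτ₁ i hi)) (hlabel hθε₂ h₁),
    hψ₂ (hτ₁ _ (hτ₂ i hi)) (hlabel hθε₁ h₂), hψ₂ (hτ₁ i hi) h₁, hψ₁ (hτ₂ i hi) h₂]
  simp only [map_one, mul_one, one_mul, map_mul, map_sub, map_add, hbraid']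
  noncomm_ring

end CorrectedCrossing

section ThetaSquare

variable {K : Type*} [Field K] (e : ℕ)

-- `θᵣ² ε(i) = thetaSqCoeff e (iᵣ - iᵣ₊₁) yᵣ yᵣ₊₁ · ε(i)`, the case formula for `θᵣ²`
def thetaSqCoeff (v : ZMod e) (x y : K) : K :=
  if v = 0 then -(1 / (y - x) ^ 2)
  else if v = 1 ∧ e ≠ 2 then x - y
  else if v = -1 ∧ e ≠ 2 then y - x
  else if v = 1 ∧ e = 2 then (x - y) * (y - x)
  else 1

-- the claimed value of `(ψᵣψᵣ₊₁ψᵣ - ψᵣ₊₁ψᵣψᵣ₊₁) ε(i)` when `iᵣ₊₂ = iᵣ`, for `v = iᵣ - iᵣ₊₁`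
def braidCoeff (v : ZMod e) (x y z : K) : K :=
  if v = 1 ∧ e ≠ 2 then -1
  else if v = -1 ∧ e ≠ 2 then 1
  else if v = 1 ∧ e = 2 then -(x + z - 2 * y)
  else 0

variable {e}

theorem braidCoeff_eq_thetaSqCoeff [CharP K e] {x y z : K} (hxy : x ≠ y) (hyz : y ≠ z) (hxz : x ≠ z)
    (v : ZMod e) :
    braidCoeff e v x y z
      = 1 / (x - z) * (thetaSqCoeff e (-v) y z - thetaSqCoeff e v x y)
        + (if v = 0 then (x + z - 2 * y) / ((x - y) ^ 2 * (y - z) ^ 2) else 0) := by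
  have hxy' := sub_ne_zero.2 hxy
  have hyz' := sub_ne_zero.2 hyz
  have hxz' := sub_ne_zero.2 hxz
  have : Nontrivial (ZMod e) := ZMod.nontrivial_iff.2 (CharP.char_ne_one K e)
  symm
  unfold thetaSqCoeff braidCoeff
  rcases eq_or_ne v 0 with rfl | hv0
  · simp only [one_div, neg_zero, ↓reduceIte, sub_neg_eq_add, zero_ne_one, ne_eq, false_and,
      zero_eq_neg, one_ne_zero]
    field_simp
    ring
  rcases eq_or_ne e 2 with rfl | he2
  · obtain rfl : v = 1 := by fin_cases v; exacts [(hv0 rfl).elim, rfl]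
    have h2 : (2 : K) = 0 := by exact_mod_cast CharP.cast_eq_zero K 2
    have hcoeff : (x - z)⁻¹ * ((y - z) * (z - y) - (x - y) * (y - x)) = x + z - 2 * y := by
      field_simp; ring
    simp only [one_div, show (-1 : ZMod 2) = 1 from rfl, one_ne_zero, ↓reduceIte, ne_eq,
      not_true_eq_false, and_false, and_self, hcoeff, add_zero, neg_sub]
    linear_combination (x + z - 2 * y) * h2
  rcases eq_or_ne v 1 with rfl | hv1
  · have : (-1 : ZMod e) ≠ 1 :=
      Ring.neg_one_ne_one_of_char_ne_two (by rwa [ZMod.ringChar_zmod_n])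
    simp only [one_div, neg_eq_zero, one_ne_zero, ↓reduceIte, this, ne_eq, he2, not_false_eq_true,
      and_true, and_self, sub_sub_sub_cancel_right, add_zero]
    field_simp
    ring
  rcases eq_or_ne v (-1) with rfl | hvm
  · simp only [one_div, neg_neg, one_ne_zero, ↓reduceIte, ne_eq, he2, not_false_eq_true, and_self,
      neg_eq_zero, hv1, and_true, sub_sub_sub_cancel_left, add_zero]
    field_simp
  simp [hv0, hv1, hvm, neg_eq_iff_eq_neg]

theorem ite_eq_map_thetaSqCoeff_mul {A : Type*} [Ring A] (j : K →+* A) (E : A) (v : ZMod e)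
    (x y : K) :
    (if v = 0 then j (-(1 / (y - x) ^ 2)) * E
      else if v = 1 ∧ e ≠ 2 then j (x - y) * E
      else if v = -1 ∧ e ≠ 2 then j (y - x) * E
      else if v = 1 ∧ e = 2 then j ((x - y) * (y - x)) * E
      else E) = j (thetaSqCoeff e v x y) * E := by
  unfold thetaSqCoeff
  split_ifs <;> simp

theorem ite_eq_map_braidCoeff_mul {A : Type*} [Ring A] (j : K →+* A) (E : A) (v : ZMod e)
    (x y z : K) :
    (if v = 1 ∧ e ≠ 2 then -E
      else if v = -1 ∧ e ≠ 2 then E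
      else if v = 1 ∧ e = 2 then -j (x + z - 2 * y) * E
      else 0) = j (braidCoeff e v x y z) * E := by
  unfold braidCoeff
  split_ifs <;> simp

theorem braid_deviation_eq_of_thetaSq [CharP K e] {A : Type*} [Ring A] (j : K →+* A) {x y z : K}
    (hxy : x ≠ y) (hyz : y ≠ z) (hxz : x ≠ z) {p q s : ZMod e} {T₁ T₂ E : A}
    (h₁ : T₁ * E = j (thetaSqCoeff e (p - q) x y) * E)
    (h₂ : T₂ * E = j (thetaSqCoeff e (q - s) y z) * E) :
    (if s = p then
        (j (1 / (x - z)) * (T₂ - T₁)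
          + if q = p then j ((x + z - 2 * y) / ((x - y) ^ 2 * (y - z) ^ 2)) else 0) * E
      else 0)
      = if s = p ∧ p - q = 1 ∧ e ≠ 2 then -E
        else if s = p ∧ p - q = -1 ∧ e ≠ 2 then E
        else if s = p ∧ p - q = 1 ∧ e = 2 then -j (x + z - 2 * y) * E
        else 0 := by
  by_cases hsp : s = p
  swap
  · simp only [hsp, false_and, if_false]
  subst hsp
  rw [← neg_sub] at h₂
  simp only [true_and, if_true]
  rw [ite_eq_map_braidCoeff_mul j, braidCoeff_eq_thetaSqCoeff hxy hyz hxz]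
  simp only [mul_sub, add_mul, sub_mul, mul_assoc, h₁, h₂, sub_eq_zero, eq_comm (a := s),
    apply_ite j, map_zero, map_add, map_sub, map_mul]

end ThetaSquare

namespace RatFn

variable {k : Type*} [Field k] {n : ℕ}

theorem act_Xv (σ : Equiv.Perm (Fin n)) (s : Fin n) : act k n σ (Xv k n s) = Xv k n (σ s) := by
  simp [act, Xv]

theorem act_swap_act_swap (a b : Fin n) (f : RatFn k n) :
    act k n (Equiv.swap a b) (act k n (Equiv.swap a b) f) = f := by
  have hsymm : (act k n (Equiv.swap a b)).symm = act k n (Equiv.swap a b) := by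
    rw [act, IsFractionRing.ringEquivOfRingEquiv_symm]
    congr 1
  simpa only [hsymm] using (act k n (Equiv.swap a b)).symm_apply_apply f

theorem Xv_injective : Function.Injective (Xv k n) :=
  (IsFractionRing.injective (MvPolynomial (Fin n) k) (RatFn k n)).comp X_injective

theorem Xv_sub_ne_zero {x y : Fin n} (h : x ≠ y) : Xv k n x - Xv k n y ≠ 0 :=
  sub_ne_zero.2 (Xv_injective.ne h)

instance (e : ℕ) [CharP k e] : CharP (RatFn k n) e := charP_of_injective_algebraMap' k e

variable (k n) in
noncomputable def psiCorrection {e : ℕ} (x y : Fin n) (w : Fin n → ZMod e) : RatFn k n :=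
  if w x = w y then 1 / (Xv k n x - Xv k n y) else 0

variable {e : ℕ}

theorem act_psiCorrection (σ : Equiv.Perm (Fin n)) (x y : Fin n) (w : Fin n → ZMod e) :
    act k n σ (psiCorrection k n x y w)
      = psiCorrection k n (σ x) (σ y) (fun s => w (σ.symm s)) := by
  simp [psiCorrection, apply_ite (act k n σ), act_Xv]

theorem psiCorrection_swap (x y : Fin n) (w : Fin n → ZMod e) :
    psiCorrection k n y x w = -psiCorrection k n x y w := by
  unfold psiCorrection
  by_cases h : w x = w y
  · rw [if_pos h.symm, if_pos h, ← neg_sub, div_neg]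
  · rw [if_neg (Ne.symm h), if_neg h, neg_zero]

theorem psiCorrection_mul_psiCorrection {x y z : Fin n} (hxy : x ≠ y) (hyz : y ≠ z)
    (hxz : x ≠ z) (w : Fin n → ZMod e) :
    psiCorrection k n x y w * psiCorrection k n y z w
      = psiCorrection k n x z w * (psiCorrection k n x y w + psiCorrection k n y z w) := by
  have := Xv_sub_ne_zero (k := k) hxy
  have := Xv_sub_ne_zero (k := k) hyz
  have := Xv_sub_ne_zero (k := k) hxz
  unfold psiCorrection
  split_ifs <;> simp_all only [ne_eq, not_true_eq_false, not_false_eq_true, one_div, mul_zero,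
    zero_mul, add_zero, zero_add]
  field_simp
  ring

theorem psiCorrection_mul_mul_sub {x y z : Fin n} (hxy : x ≠ y) (hyz : y ≠ z)
    (w : Fin n → ZMod e) :
    psiCorrection k n x y w * psiCorrection k n y z w
        * (psiCorrection k n y z w - psiCorrection k n x y w)
      = if w y = w x ∧ w z = w x then
          (Xv k n x + Xv k n z - 2 * Xv k n y)
            / ((Xv k n x - Xv k n y) ^ 2 * (Xv k n y - Xv k n z) ^ 2)
        else 0 := by
  have := Xv_sub_ne_zero (k := k) hxy
  have := Xv_sub_ne_zero (k := k) hyz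
  unfold psiCorrection
  split_ifs <;> simp_all only [ne_eq, not_true_eq_false, not_and, and_self, true_and, one_div,
    mul_zero, zero_mul, zero_sub, sub_zero, sub_self, mul_neg, neg_zero]
  field_simp
  ring

theorem map_psiCorrection_braid_eq {A : Type*} [Ring A] (j : RatFn k n →+* A) {a b c : Fin n}
    (hab : a ≠ b) (hbc : b ≠ c) (i : Fin n → ZMod e) (X E : A) :
    (j (psiCorrection k n a c i) * X
        + j (psiCorrection k n a b i * psiCorrection k n b c i
            * (psiCorrection k n b c i - psiCorrection k n a b i))) * E
      = if i c = i a then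
          (j (1 / (Xv k n a - Xv k n c)) * X
            + if i b = i a then
                j ((Xv k n a + Xv k n c - 2 * Xv k n b)
                  / ((Xv k n a - Xv k n b) ^ 2 * (Xv k n b - Xv k n c) ^ 2))
              else 0) * E
        else 0 := by
  rw [psiCorrection_mul_mul_sub hab hbc]
  by_cases hca : i c = i a
  · have hD : psiCorrection k n a c i = 1 / (Xv k n a - Xv k n c) := if_pos hca.symm
    rw [if_pos hca, hD, apply_ite j, map_zero]
    simp only [hca, and_true]
  · have hD : psiCorrection k n a c i = 0 := if_neg (Ne.symm hca)
    rw [if_neg hca, hD, if_neg (fun h => hca h.2)]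
    simp only [map_zero, zero_mul, zero_add]

theorem mul_map_act_swap {A : Type*} [Ring A] {j : RatFn k n →+* A} {θ : A} {a b : Fin n}
    (h : ∀ f, j f * θ = θ * j (act k n (Equiv.swap a b) f)) (f : RatFn k n) :
    θ * j f = j (act k n (Equiv.swap a b) f) * θ := by
  rw [h, act_swap_act_swap]

theorem psi_braid_sub_mul {A : Type*} [Ring A] {j : RatFn k n →+* A}
    {C : Finset (Fin n → ZMod e)} {ε : (Fin n → ZMod e) → A} (hε : OrthogonalIdempotents ε)
    (hcomm : ∀ f w, j f * ε w = ε w * j f) {a b c : Fin n} (hab : a ≠ b) (hbc : b ≠ c)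
    (hac : a ≠ c) {θ₁ θ₂ : A}
    (hθj₁ : ∀ f, j f * θ₁ = θ₁ * j (act k n (Equiv.swap a b) f))
    (hθj₂ : ∀ f, j f * θ₂ = θ₂ * j (act k n (Equiv.swap b c) f))
    (hθε₁ : ∀ w, θ₁ * ε w = ε (fun s => w (Equiv.swap a b s)) * θ₁)
    (hθε₂ : ∀ w, θ₂ * ε w = ε (fun s => w (Equiv.swap b c s)) * θ₂)
    (hC₁ : ∀ w ∈ C, (fun s => w (Equiv.swap a b s)) ∈ C)
    (hC₂ : ∀ w ∈ C, (fun s => w (Equiv.swap b c s)) ∈ C)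
    (hbraid : θ₁ * θ₂ * θ₁ = θ₂ * θ₁ * θ₂) {i : Fin n → ZMod e} (hi : i ∈ C) :
    let ψ₁ := correctedCrossing C ε j θ₁ (psiCorrection k n a b)
    let ψ₂ := correctedCrossing C ε j θ₂ (psiCorrection k n b c)
    (ψ₁ * ψ₂ * ψ₁ - ψ₂ * ψ₁ * ψ₂) * ε i
      = (j (psiCorrection k n a c i) * (θ₂ * θ₂ - θ₁ * θ₁)
          + j (psiCorrection k n a b i * psiCorrection k n b c i
              * (psiCorrection k n b c i - psiCorrection k n a b i))) * ε i := by
  have expand := correctedCrossing_braid_sub hε hcomm (mul_map_act_swap hθj₁)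
    (mul_map_act_swap hθj₂) hθε₁ hθε₂ hC₁ hC₂ hbraid (psiCorrection k n a b)
    (psiCorrection k n b c) hi
  have coeff₁ : ∀ w : Fin n → ZMod e, psiCorrection k n a b w * psiCorrection k n b c w
      + psiCorrection k n a c w * psiCorrection k n b a w
      - psiCorrection k n b c w * psiCorrection k n a c w = 0 := fun w => by
    rw [psiCorrection_swap (k := k) a b]
    linear_combination psiCorrection_mul_psiCorrection (k := k) hab hbc hac w
  have coeff₂ : ∀ w : Fin n → ZMod e, psiCorrection k n b c w * psiCorrection k n a b w
      + psiCorrection k n a c w * psiCorrection k n c b w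
      - psiCorrection k n a b w * psiCorrection k n a c w = 0 := fun w => by
    rw [psiCorrection_swap (k := k) b c]
    linear_combination psiCorrection_mul_psiCorrection (k := k) hab hbc hac w
  have scalar : psiCorrection k n b c i * psiCorrection k n a b i * psiCorrection k n b c i
      - psiCorrection k n a b i * psiCorrection k n b c i * psiCorrection k n a b i
      = psiCorrection k n a b i * psiCorrection k n b c i
        * (psiCorrection k n b c i - psiCorrection k n a b i) := by ring
  dsimp only at expand ⊢
  rw [expand, scalar]
  simp only [map_mul, act_psiCorrection, Equiv.symm_swap, Equiv.swap_apply_left,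
    Equiv.swap_apply_right, Equiv.swap_apply_of_ne_of_ne hac.symm hbc.symm,
    Equiv.swap_apply_of_ne_of_ne hab hac, Equiv.swap_apply_self, coeff₁, coeff₂, sub_self,
    map_zero, zero_mul]
  noncomm_ring

end RatFn

open RatFn in
/-- In the Lusztig extension `L`, the elements
`ψᵣ = Σ_{i∈C}[θᵣ - δ_{iᵣ,iᵣ₊₁}/(yᵣ - yᵣ₊₁)]ε(i)` satisfy the KLR braid-deviation formula:
`(ψᵣψᵣ₊₁ψᵣ - ψᵣ₊₁ψᵣψᵣ₊₁)ε(i)` equals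
`δ_{iᵣ₊₂,iᵣ}[(θᵣ₊₁² - θᵣ²)/(yᵣ - yᵣ₊₂) + δ_{iᵣ₊₁,iᵣ}(yᵣ + yᵣ₊₂ - 2yᵣ₊₁)/((yᵣ-yᵣ₊₁)²(yᵣ₊₁-yᵣ₊₂)²)]ε(i)`,
and is given explicitly by the case formula. -/
theorem psi_braid (k : Type*) [Field k] (n e : ℕ) [CharP k e]
    (A : Type*) [Ring A] (j : RatFn k n →+* A)
    (C : Finset (Fin n → ZMod e)) (ε : (Fin n → ZMod e) → A) (θ : ℕ → A)
    (horth : ∀ i i', ε i * ε i' = if i = i' then ε i else 0)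
    (hcomm : ∀ (f : RatFn k n) (i), j f * ε i = ε i * j f)
    (hC : ∀ (r : ℕ) (hr : r + 1 < n), ∀ i ∈ C,
      (fun s => i (Equiv.swap ⟨r, Nat.lt_of_succ_lt hr⟩ ⟨r + 1, hr⟩ s)) ∈ C)
    (hθε : ∀ (r : ℕ) (hr : r + 1 < n) (i : Fin n → ZMod e),
      θ r * ε i = ε (fun s => i (Equiv.swap ⟨r, Nat.lt_of_succ_lt hr⟩ ⟨r + 1, hr⟩ s)) * θ r)
    (hfθ : ∀ (r : ℕ) (hr : r + 1 < n) (f : RatFn k n),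
      j f * θ r = θ r * j (act k n (Equiv.swap ⟨r, Nat.lt_of_succ_lt hr⟩ ⟨r + 1, hr⟩) f))
    (hθbraid : ∀ r : ℕ, r + 2 < n → θ r * θ (r + 1) * θ r = θ (r + 1) * θ r * θ (r + 1))
    (hθ2 : ∀ (r : ℕ) (hr : r + 1 < n), ∀ i ∈ C,
      θ r * θ r * ε i
        = if i ⟨r, Nat.lt_of_succ_lt hr⟩ - i ⟨r + 1, hr⟩ = 0 then
            j (-(1 / (Xv k n ⟨r + 1, hr⟩ - Xv k n ⟨r, Nat.lt_of_succ_lt hr⟩) ^ 2)) * ε i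
          else if i ⟨r, Nat.lt_of_succ_lt hr⟩ - i ⟨r + 1, hr⟩ = 1 ∧ e ≠ 2 then
            j (Xv k n ⟨r, Nat.lt_of_succ_lt hr⟩ - Xv k n ⟨r + 1, hr⟩) * ε i
          else if i ⟨r, Nat.lt_of_succ_lt hr⟩ - i ⟨r + 1, hr⟩ = -1 ∧ e ≠ 2 then
            j (Xv k n ⟨r + 1, hr⟩ - Xv k n ⟨r, Nat.lt_of_succ_lt hr⟩) * ε i
          else if i ⟨r, Nat.lt_of_succ_lt hr⟩ - i ⟨r + 1, hr⟩ = 1 ∧ e = 2 then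
            j ((Xv k n ⟨r, Nat.lt_of_succ_lt hr⟩ - Xv k n ⟨r + 1, hr⟩)
                * (Xv k n ⟨r + 1, hr⟩ - Xv k n ⟨r, Nat.lt_of_succ_lt hr⟩)) * ε i
          else ε i) :
    ∀ (r : ℕ) (hr : r + 2 < n),
      let a : Fin n := ⟨r, by omega⟩
      let b : Fin n := ⟨r + 1, by omega⟩
      let c : Fin n := ⟨r + 2, hr⟩
      let ψ₁ : A := ∑ i ∈ C,
        (θ r - if i a = i b then j (1 / (Xv k n a - Xv k n b)) else 0) * ε i
      let ψ₂ : A := ∑ i ∈ C,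
        (θ (r + 1) - if i b = i c then j (1 / (Xv k n b - Xv k n c)) else 0) * ε i
      ∀ i ∈ C,
        (ψ₁ * ψ₂ * ψ₁ - ψ₂ * ψ₁ * ψ₂) * ε i
            = (if i c = i a then
                (j (1 / (Xv k n a - Xv k n c)) * (θ (r + 1) * θ (r + 1) - θ r * θ r)
                  + (if i b = i a then
                      j ((Xv k n a + Xv k n c - 2 * Xv k n b)
                        / ((Xv k n a - Xv k n b) ^ 2 * (Xv k n b - Xv k n c) ^ 2))
                    else 0)) * ε i
              else 0)
        ∧ (ψ₁ * ψ₂ * ψ₁ - ψ₂ * ψ₁ * ψ₂) * ε i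
            = if i c = i a ∧ i a - i b = 1 ∧ e ≠ 2 then -ε i
              else if i c = i a ∧ i a - i b = -1 ∧ e ≠ 2 then ε i
              else if i c = i a ∧ i a - i b = 1 ∧ e = 2 then
                -(j (Xv k n a + Xv k n c - 2 * Xv k n b)) * ε i
              else 0 := by
  intro r hr a b c ψ₁ ψ₂ i hi
  have hr₁ : r + 1 < n := by omega
  have hab : a ≠ b := Fin.ne_of_val_ne (by simp [a, b])
  have hbc : b ≠ c := Fin.ne_of_val_ne (by simp [b, c])
  have hac : a ≠ c := Fin.ne_of_val_ne (by simp [a, c])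
  have hε : OrthogonalIdempotents ε :=
    ⟨fun w => by simpa [IsIdempotentElem] using horth w w,
      fun v w h => by simpa [h] using horth v w⟩
  have hψ : ψ₁ = correctedCrossing C ε j (θ r) (psiCorrection k n a b)
      ∧ ψ₂ = correctedCrossing C ε j (θ (r + 1)) (psiCorrection k n b c) := by
    simp only [ψ₁, ψ₂, correctedCrossing, psiCorrection, apply_ite j, map_zero, and_self]
  have first := psi_braid_sub_mul hε hcomm hab hbc hac (hfθ r hr₁) (hfθ (r + 1) hr)
    (hθε r hr₁) (hθε (r + 1) hr) (hC r hr₁) (hC (r + 1) hr) (hθbraid r hr) hi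
  dsimp only at first
  rw [map_psiCorrection_braid_eq j hab hbc, ← hψ.1, ← hψ.2] at first
  exact ⟨first, first.trans <| braid_deviation_eq_of_thetaSq j (Xv_injective.ne hab)
    (Xv_injective.ne hbc) (Xv_injective.ne hac)
    ((hθ2 r hr₁ i hi).trans (ite_eq_map_thetaSqCoeff_mul j _ _ _ _))
    ((hθ2 (r + 1) hr i hi).trans (ite_eq_map_thetaSqCoeff_mul j _ _ _ _))⟩
end
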